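/- arXiv:1206.3337 — 2 statements merged into one kernel-verified Lean document; each statement's English description precedes it below -/
import Mathlib

section
/- Let S be an ℝ≥0-module, let W be a Hausdorff locally convex real topological vector space, and let T be a superlinear set-valued map assigning to each z ∈ S a nonempty compact convex subset T(z) ⊆ W. Then the following are equivalent: (1) T is linear; (2) for every x ∈ S and every y ∈ T(x) there exists a linear selection a of T with a(x) = y. -/
/-!
By Zorn's lemma, every linear set-valued map `F` with nonempty compact values contains a minimal
one `G`; here compactness is what makes the intersection of a chain again additive. Each exposed
face `z ↦ l.toExposed (G z)` is again such a map, so by minimality every continuous functional is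
constant on each `G z`, and since functionals separate points `G` is single-valued: a linear
selection of `F`.

If `T` has convex values as well, the values at `x` of the linear selections of `T` form a compact
convex subset of `T x` (Tychonoff). It meets the face of `T x` exposed by any functional `l`, as
the face map of `T` has a linear selection; by Hahn–Banach it is all of `T x`. Conversely, a linear
selection through a point of `T (u + v)` splits it into a point of `T u` and a point of `T v`.
-/

open scoped NNReal Pointwise

open Set

theorem Set.smul_set_iInter₀ {G₀ β ι : Type*} [GroupWithZero G₀] [MulAction G₀ β] {c : G₀}
    (hc : c ≠ 0) (t : ι → Set β) : c • ⋂ i, t i = ⋂ i, c • t i :=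
  image_iInter (MulAction.bijective (Units.mk0 c hc)) t

theorem Set.iInter_add_of_directed {W ι : Type*} [Add W] [TopologicalSpace W] [ContinuousAdd W]
    [T2Space W] [Nonempty ι] {A B : ι → Set W} (hA : ∀ i, IsCompact (A i))
    (hB : ∀ i, IsCompact (B i)) (hdir : Directed (· ⊇ ·) fun i => A i ×ˢ B i) :
    ⋂ i, (A i + B i) = (⋂ i, A i) + ⋂ i, B i := by
  refine Subset.antisymm (fun w hw => ?_)
    (subset_iInter fun i => add_subset_add (iInter_subset _ i) (iInter_subset _ i))
  -- the decompositions of `w` form a directed family of nonempty compact sets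
  let D i : Set (W × W) := A i ×ˢ B i ∩ {p | p.1 + p.2 = w}
  have hD : ∀ i, IsCompact (D i) := fun i =>
    ((hA i).prod (hB i)).inter_right
      (isClosed_eq (continuous_fst.add continuous_snd) continuous_const)
  have hDne : ∀ i, (D i).Nonempty := fun i => by
    obtain ⟨a, ha, b, hb, hab⟩ := mem_add.1 (mem_iInter.1 hw i)
    exact ⟨(a, b), ⟨ha, hb⟩, hab⟩
  have hDdir : Directed (· ⊇ ·) D :=
    fun i j => let ⟨k, hi, hj⟩ := hdir i j
      ⟨k, inter_subset_inter_left _ hi, inter_subset_inter_left _ hj⟩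
  obtain ⟨p, hp⟩ := IsCompact.nonempty_iInter_of_directed_nonempty_isCompact_isClosed D hDdir hDne
    hD fun i => (hD i).isClosed
  simp only [D, mem_iInter] at hp
  exact ⟨p.1, mem_iInter.2 fun i => (hp i).1.1, p.2, mem_iInter.2 fun i => (hp i).1.2,
    (hp (Classical.arbitrary ι)).2⟩

namespace ContinuousLinearMap

variable {𝕜 E : Type*} [TopologicalSpace 𝕜] [TopologicalSpace E] [AddCommMonoid E]

theorem toExposed_add [Ring 𝕜] [PartialOrder 𝕜] [IsOrderedAddMonoid 𝕜] [Module 𝕜 E]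
    (l : StrongDual 𝕜 E) (A B : Set E) :
    l.toExposed (A + B) = l.toExposed A + l.toExposed B := by
  apply Subset.antisymm
  · rintro _ ⟨hw, hmax⟩
    obtain ⟨a, ha, b, hb, rfl⟩ := mem_add.1 hw
    refine add_mem_add ⟨ha, fun a' ha' => ?_⟩ ⟨hb, fun b' hb' => ?_⟩
    · have := hmax _ (add_mem_add ha' hb)
      rw [map_add, map_add] at this
      exact le_of_add_le_add_right this
    · have := hmax _ (add_mem_add ha hb')
      rw [map_add, map_add] at this
      exact le_of_add_le_add_left this
  · rintro _ ⟨a, ⟨ha, hamax⟩, b, ⟨hb, hbmax⟩, rfl⟩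
    refine ⟨add_mem_add ha hb, ?_⟩
    rintro _ ⟨a', ha', b', hb', rfl⟩
    rw [map_add, map_add]
    exact add_le_add (hamax a' ha') (hbmax b' hb')

theorem toExposed_smul [Ring 𝕜] [LinearOrder 𝕜] [IsStrictOrderedRing 𝕜] [Module 𝕜 E]
    (l : StrongDual 𝕜 E) {c : 𝕜} (hc : 0 < c) (A : Set E) :
    l.toExposed (c • A) = c • l.toExposed A := by
  ext w
  constructor
  · rintro ⟨hw, hmax⟩
    obtain ⟨y, hy, rfl⟩ := mem_smul_set.1 hw
    refine ⟨y, ⟨hy, fun v hv => ?_⟩, rfl⟩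
    have := hmax _ (smul_mem_smul_set hv)
    rw [map_smul, map_smul, smul_eq_mul, smul_eq_mul] at this
    exact le_of_mul_le_mul_left this hc
  · rintro ⟨y, ⟨hy, hmax⟩, rfl⟩
    refine ⟨smul_mem_smul_set hy, ?_⟩
    rintro _ ⟨v, hv, rfl⟩
    rw [map_smul, map_smul, smul_eq_mul, smul_eq_mul]
    exact mul_le_mul_of_nonneg_left (hmax v hv) hc.le

end ContinuousLinearMap

section SetValued

variable {S W : Type*} [Add S] [SMul ℝ≥0 S] [AddCommGroup W] [Module ℝ W]

structure IsLinearSelection (T : S → Set W) (a : S → W) : Prop where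
  mem : ∀ z, a z ∈ T z
  map_add : ∀ u v, a (u + v) = a u + a v
  map_smul : ∀ c : ℝ≥0, 0 < c → ∀ u, a (c • u) = (c : ℝ) • a u

theorem IsLinearSelection.mono {F G : S → Set W} {a : S → W} (ha : IsLinearSelection G a)
    (hGF : G ≤ F) : IsLinearSelection F a :=
  ⟨fun z => hGF z (ha.mem z), ha.map_add, ha.map_smul⟩

variable {T : S → Set W}

theorem convex_setOf_isLinearSelection (hT : ∀ z, Convex ℝ (T z)) :
    Convex ℝ {a | IsLinearSelection T a} := by
  intro a ha b hb p q hp hq hpq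
  refine ⟨fun z => hT z (ha.mem z) (hb.mem z) hp hq hpq, fun u v => ?_, fun c hc u => ?_⟩
  · simp only [Pi.add_apply, Pi.smul_apply, ha.map_add, hb.map_add, smul_add]
    abel
  · simp only [Pi.add_apply, Pi.smul_apply, ha.map_smul c hc, hb.map_smul c hc, smul_add,
      smul_comm p, smul_comm q]

theorem add_eq_of_forall_exists_isLinearSelection (hsuper : ∀ u v, T u + T v ⊆ T (u + v))
    (hsel : ∀ x, ∀ y ∈ T x, ∃ a, IsLinearSelection T a ∧ a x = y) (u v : S) :
    T u + T v = T (u + v) := by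
  refine (hsuper u v).antisymm fun w hw => ?_
  obtain ⟨a, ha, rfl⟩ := hsel _ w hw
  rw [ha.map_add]
  exact add_mem_add (ha.mem u) (ha.mem v)

variable [TopologicalSpace W]

structure IsCompactLinearSetMap (G : S → Set W) : Prop where
  nonempty : ∀ z, (G z).Nonempty
  isCompact : ∀ z, IsCompact (G z)
  add : ∀ u v, G u + G v = G (u + v)
  smul : ∀ c : ℝ≥0, 0 < c → ∀ z, G (c • z) = (c : ℝ) • G z

namespace IsCompactLinearSetMap

variable {G F : S → Set W}

theorem toExposed [T2Space W] (hG : IsCompactLinearSetMap G) (l : StrongDual ℝ W) :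
    IsCompactLinearSetMap fun z => l.toExposed (G z) where
  nonempty z :=
    let ⟨w, hw, hmax⟩ := (hG.isCompact z).exists_isMaxOn (hG.nonempty z) l.continuous.continuousOn
    ⟨w, hw, fun _ hv => hmax hv⟩
  isCompact z := ContinuousLinearMap.toExposed.isExposed.isCompact (hG.isCompact z)
  add u v := by rw [← l.toExposed_add, hG.add]
  smul c hc z := by rw [hG.smul c hc, l.toExposed_smul (NNReal.coe_pos.2 hc)]

theorem iInter [ContinuousAdd W] [T2Space W] {ι : Type*} [Nonempty ι] {G : ι → S → Set W}
    (hG : ∀ i, IsCompactLinearSetMap (G i)) (hdir : Directed (· ≥ ·) G) :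
    IsCompactLinearSetMap fun z => ⋂ i, G i z where
  nonempty z :=
    IsCompact.nonempty_iInter_of_directed_nonempty_isCompact_isClosed _
      (fun i j => let ⟨k, hi, hj⟩ := hdir i j; ⟨k, hi z, hj z⟩)
      (fun i => (hG i).nonempty z) (fun i => (hG i).isCompact z)
      (fun i => ((hG i).isCompact z).isClosed)
  isCompact z := ((hG (Classical.arbitrary ι)).isCompact z).of_isClosed_subset
    (isClosed_iInter fun i => ((hG i).isCompact z).isClosed) (iInter_subset _ _)
  add u v := by
    simp only [← (hG _).add]
    exact (iInter_add_of_directed (fun i => (hG i).isCompact u) (fun i => (hG i).isCompact v)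
      fun i j => let ⟨k, hi, hj⟩ := hdir i j
        ⟨k, prod_mono (hi u) (hi v), prod_mono (hj u) (hj v)⟩).symm
  smul c hc z := by
    simp only [(hG _).smul c hc]
    exact (smul_set_iInter₀ (NNReal.coe_ne_zero.2 hc.ne') _).symm

theorem exists_minimal_le [ContinuousAdd W] [T2Space W] (hF : IsCompactLinearSetMap F) :
    ∃ G ≤ F, Minimal IsCompactLinearSetMap G := by
  refine @zorn_le_nonempty₀ (S → Set W)ᵒᵈ _ {G | IsCompactLinearSetMap G}
    (fun c hcs hc G hG => ?_) F hF
  have : Nonempty c := ⟨⟨G, hG⟩⟩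
  exact ⟨fun z => ⋂ H : c, H.1 z, iInter (fun H => hcs H.2) (hc.directed (f := id)),
    fun H hH z => iInter_subset (fun H : c => H.1 z) ⟨H, hH⟩⟩

theorem subsingleton_of_minimal [SeparatingDual ℝ W] [T2Space W]
    (hG : Minimal IsCompactLinearSetMap G) (z : S) : (G z).Subsingleton := by
  have hmax : ∀ l : StrongDual ℝ W, ∀ w ∈ G z, ∀ v ∈ G z, l v ≤ l w := by
    intro l w hw v hv
    have hface := hG.eq_of_le (hG.prop.toExposed l)
      fun z => ContinuousLinearMap.toExposed.isExposed.subset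
    rw [← hface] at hw
    exact hw.2 v hv
  intro v hv w hw
  by_contra hne
  obtain ⟨l, hl⟩ := SeparatingDual.exists_separating_of_ne (R := ℝ) hne
  exact hl ((hmax l w hw v hv).antisymm (hmax l v hv w hw))

theorem exists_isLinearSelection [SeparatingDual ℝ W] [ContinuousAdd W] [T2Space W]
    (hF : IsCompactLinearSetMap F) : ∃ a, IsLinearSelection F a := by
  obtain ⟨G, hGF, hG⟩ := hF.exists_minimal_le
  choose a ha using hG.prop.nonempty
  have hsub := subsingleton_of_minimal hG
  refine ⟨a, IsLinearSelection.mono ⟨ha, fun u v => ?_, fun c hc u => ?_⟩ hGF⟩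
  · exact hsub _ (ha _) (hG.prop.add u v ▸ add_mem_add (ha u) (ha v))
  · exact hsub _ (ha _) (hG.prop.smul c hc u ▸ smul_mem_smul_set (ha u))

end IsCompactLinearSetMap

theorem isCompact_setOf_isLinearSelection [ContinuousAdd W] [ContinuousConstSMul ℝ W] [T2Space W]
    (hT : ∀ z, IsCompact (T z)) : IsCompact {a | IsLinearSelection T a} := by
  have hset : {a | IsLinearSelection T a} = univ.pi T ∩ ({a | ∀ u v, a (u + v) = a u + a v} ∩
      {a | ∀ c : ℝ≥0, 0 < c → ∀ u, a (c • u) = (c : ℝ) • a u}) := by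
    ext a
    exact ⟨fun h => ⟨fun z _ => h.mem z, h.map_add, h.map_smul⟩,
      fun ⟨h₁, h₂, h₃⟩ => ⟨fun z => h₁ z trivial, h₂, h₃⟩⟩
  rw [hset]
  refine (isCompact_univ_pi hT).inter_right (IsClosed.inter ?_ ?_)
  · simp only [ofPred_forall]
    exact isClosed_iInter fun u => isClosed_iInter fun v =>
      isClosed_eq (continuous_apply _) ((continuous_apply u).add (continuous_apply v))
  · simp only [ofPred_forall]
    exact isClosed_iInter fun c => isClosed_iInter fun _ => isClosed_iInter fun u =>
      isClosed_eq (continuous_apply _) ((continuous_apply u).const_smul _)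

theorem IsCompactLinearSetMap.exists_isLinearSelection_apply_eq [IsTopologicalAddGroup W]
    [ContinuousSMul ℝ W] [T2Space W] [LocallyConvexSpace ℝ W] (hT : IsCompactLinearSetMap T)
    (hconv : ∀ z, Convex ℝ (T z)) {x : S} {y : W} (hy : y ∈ T x) :
    ∃ a, IsLinearSelection T a ∧ a x = y := by
  set R := (fun a : S → W => a x) '' {a | IsLinearSelection T a}
  have hRc : IsCompact R :=
    (isCompact_setOf_isLinearSelection hT.isCompact).image (continuous_apply x)
  have hRconv : Convex ℝ R := (convex_setOf_isLinearSelection hconv).linear_image (LinearMap.proj x)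
  by_contra hyR
  obtain ⟨l, u, hlR, hly⟩ := geometric_hahn_banach_closed_point hRconv hRc.isClosed hyR
  obtain ⟨a, ha⟩ := (hT.toExposed l).exists_isLinearSelection
  have hax : l (a x) < u :=
    hlR _ ⟨a, ha.mono fun _ => ContinuousLinearMap.toExposed.isExposed.subset, rfl⟩
  have hya : l y ≤ l (a x) := (ha.mem x).2 y hy
  linarith

end SetValued

/-- A superlinear set-valued map with nonempty compact convex values is linear
iff every point of its graph lies on the graph of some linear selection. -/
theorem stmt2 {S W : Type*} [AddCommMonoid S] [Module ℝ≥0 S]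
    [AddCommGroup W] [Module ℝ W] [TopologicalSpace W] [IsTopologicalAddGroup W]
    [ContinuousSMul ℝ W] [T2Space W] [LocallyConvexSpace ℝ W]
    (T : S → Set W)
    (hT : ∀ z, (T z).Nonempty ∧ IsCompact (T z) ∧ Convex ℝ (T z))
    (hsuper : ∀ x y, T x + T y ⊆ T (x + y))
    (hhom : ∀ c : ℝ≥0, 0 < c → ∀ x, T (c • x) = (c : ℝ) • T x) :
    ((∀ x y, T x + T y = T (x + y)) ∧
        (∀ c : ℝ≥0, 0 < c → ∀ x, T (c • x) = (c : ℝ) • T x)) ↔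
      (∀ x : S, ∀ y ∈ T x,
        ∃ a : S → W, (∀ z, a z ∈ T z) ∧ (∀ u v, a (u + v) = a u + a v) ∧
          (∀ c : ℝ≥0, 0 < c → ∀ u, a (c • u) = (c : ℝ) • a u) ∧ a x = y) := by
  constructor
  · rintro ⟨hadd, -⟩ x y hy
    have hTlin : IsCompactLinearSetMap T := ⟨fun z => (hT z).1, fun z => (hT z).2.1, hadd, hhom⟩
    obtain ⟨a, ha, rfl⟩ := hTlin.exists_isLinearSelection_apply_eq (fun z => (hT z).2.2) hy
    exact ⟨a, ha.mem, ha.map_add, ha.map_smul, rfl⟩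
  · intro hsel
    refine ⟨add_eq_of_forall_exists_isLinearSelection hsuper fun x y hy => ?_, hhom⟩
    obtain ⟨a, hmem, hadd, hsmul, hax⟩ := hsel x y hy
    exact ⟨a, ⟨hmem, hadd, hsmul⟩, hax⟩
end

section
/- Let S be a real vector space, K ⊆ S a nonempty convex set such that the cone C = K_sus ∪ {0} ⊆ ℝ × S has the Riesz decomposition property with respect to its intrinsic order (u ≼ v iff v − u ∈ C). Let W be a Hausdorff locally convex real topological vector space and let T be a convex set-valued map assigning to each x ∈ K a nonempty compact convex subset T(x) ⊆ W. Then T admits an affine selection. Moreover, for fixed x ∈ K and y ∈ T(x), there exists an affine selection a of T with a(x) = y if and only if for every N ∈ ℕ, every θ₁, …, θ_N > 0 with θ₁ + … + θ_N = 1 and every x₁, …, x_N ∈ K with x = θ₁ x₁ + … + θ_N x_N one has y ∈ θ₁ • T(x₁) + … + θ_N • T(x_N) (Minkowski sum). -/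
/-!
Extend `T` to the cone `C` by `T̃ (λ, λ • x) = λ • T x`, `T̃ 0 = {0}` (this is `homogenize T`);
convexity of `T` says `T̃ p + T̃ q ⊆ T̃ (p + q)`. For `p ∈ C` let `T* p` (`affineCore K T p`) be
the intersection of the Minkowski sums `∑ T̃ vⱼ` over all decompositions `p = ∑ vⱼ` in `C`. By the
Riesz property two decompositions have a common refinement, and refining shrinks these sums, so
`T* p` is a directed intersection of nonempty compact sets: it is nonempty and compact, and
`T* (p + q) = T* p + T* q`. Hence `x ↦ T* (1, x)` is an affine map with nonempty compact values
inside `T`, and `y ∈ T* (1, x)` is exactly the Minkowski condition of the theorem.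

An affine map `A` with nonempty compact values has an affine selection: a Zorn-minimal affine
submap is single-valued, since otherwise the exposed faces cut out by a separating functional
would form a smaller one. Moreover every `y ∈ A x` is the value at `x` of an affine selection:
these values form a compact convex set containing a maximiser over `A x` of every continuous
functional, so Hahn–Banach puts `y` in it. Necessity of the Minkowski condition is Jensen's
identity for affine maps.
-/

open scoped Pointwise

open Set

section AffineMaps

variable {S : Type*} [AddCommGroup S] [Module ℝ S]

def AffineOn {V : Type*} [Add V] [SMul ℝ V] (K : Set S) (a : S → V) : Prop :=
  ∀ x ∈ K, ∀ y ∈ K, ∀ θ : ℝ, 0 < θ → θ < 1 → a ((1 - θ) • x + θ • y) = (1 - θ) • a x + θ • a y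

def ConvexSetMapOn {W : Type*} [Add W] [SMul ℝ W] (K : Set S) (T : S → Set W) : Prop :=
  ∀ x ∈ K, ∀ y ∈ K, ∀ θ : ℝ, 0 < θ → θ < 1 → (1 - θ) • T x + θ • T y ⊆ T ((1 - θ) • x + θ • y)

variable {W : Type*} [AddCommGroup W] [Module ℝ W] {K : Set S}

theorem AffineOn.convex {B : S → Set W} (hB : AffineOn K B) {z : S} (hz : z ∈ K) :
    Convex ℝ (B z) := by
  refine convex_iff_forall_pos.2 fun u hu v hv a b ha hb hab => ?_
  obtain rfl : a = 1 - b := by linarith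
  have hzz : (1 - b) • z + b • z = z := by rw [← add_smul, sub_add_cancel, one_smul]
  rw [← hzz, hB z hz z hz b hb (by linarith)]
  exact add_mem_add (smul_mem_smul_set hu) (smul_mem_smul_set hv)

theorem AffineOn.map_sum {a : S → W} (ha : AffineOn K a) (hK : Convex ℝ K) {ι : Type*}
    {s : Finset ι} {θ : ι → ℝ} {xs : ι → S} (h0 : ∀ i ∈ s, 0 ≤ θ i) (h1 : ∑ i ∈ s, θ i = 1)
    (hxs : ∀ i ∈ s, xs i ∈ K) : a (∑ i ∈ s, θ i • xs i) = ∑ i ∈ s, θ i • a (xs i) := by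
  have hgraph : Convex ℝ ((fun x => (x, a x)) '' K) := by
    refine convex_iff_forall_pos.2 ?_
    rintro _ ⟨x, hx, rfl⟩ _ ⟨y, hy, rfl⟩ c d hc hd hcd
    obtain rfl : c = 1 - d := by linarith
    exact ⟨_, hK hx hy hc.le hd.le hcd, by simp [ha x hx y hy d hd (by linarith)]⟩
  obtain ⟨z, -, hz⟩ := hgraph.sum_mem h0 h1 fun i hi => mem_image_of_mem _ (hxs i hi)
  simp only [Prod.ext_iff, Prod.fst_sum, Prod.snd_sum, Prod.smul_fst, Prod.smul_snd] at hz
  rw [← hz.1, hz.2]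

end AffineMaps

section Compactness

variable {X : Type*} [TopologicalSpace X] [T2Space X]

theorem Directed.nonempty_isCompact_iInter {ι : Type*} [Nonempty ι] {F : ι → Set X}
    (hF : Directed (· ⊇ ·) F) (hc : ∀ i, (F i).Nonempty ∧ IsCompact (F i)) :
    (⋂ i, F i).Nonempty ∧ IsCompact (⋂ i, F i) :=
  ⟨IsCompact.nonempty_iInter_of_directed_nonempty_isCompact_isClosed _ hF (hc · |>.1)
      (hc · |>.2) fun i => (hc i).2.isClosed,
    (hc (Classical.arbitrary ι)).2.of_isClosed_subset (isClosed_iInter fun i => (hc i).2.isClosed)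
      (iInter_subset _ _)⟩

theorem iInter_smul_add_smul_subset [AddCommGroup X] [Module ℝ X] [ContinuousAdd X]
    [ContinuousConstSMul ℝ X] {ι κ : Type*} [Nonempty ι] [Nonempty κ] {A : ι → Set X}
    {B : κ → Set X} (hdA : Directed (· ⊇ ·) A) (hdB : Directed (· ⊇ ·) B)
    (hA : ∀ i, IsCompact (A i)) (hB : ∀ j, IsCompact (B j)) (a b : ℝ) :
    ⋂ i, ⋂ j, (a • A i + b • B j) ⊆ a • (⋂ i, A i) + b • ⋂ j, B j := by
  intro w hw
  let F (ij : ι × κ) : Set (X × X) := A ij.1 ×ˢ B ij.2 ∩ {q | a • q.1 + b • q.2 = w}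
  have hF (ij : ι × κ) : IsCompact (F ij) :=
    ((hA ij.1).prod (hB ij.2)).inter_right (isClosed_eq (by fun_prop) continuous_const)
  have hdir : Directed (· ⊇ ·) F := by
    rintro ⟨i, j⟩ ⟨i', j'⟩
    obtain ⟨k, hk, hk'⟩ := hdA i i'
    obtain ⟨l, hl, hl'⟩ := hdB j j'
    exact ⟨(k, l), inter_subset_inter_left _ (prod_mono hk hl),
      inter_subset_inter_left _ (prod_mono hk' hl')⟩
  obtain ⟨q, hq⟩ := IsCompact.nonempty_iInter_of_directed_nonempty_isCompact_isClosed F hdir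
    (fun ij => by
      obtain ⟨_, ⟨u, hu, rfl⟩, _, ⟨v, hv, rfl⟩, huv⟩ := mem_iInter₂.1 hw ij.1 ij.2
      exact ⟨(u, v), ⟨hu, hv⟩, huv⟩)
    hF fun ij => (hF ij).isClosed
  simp only [mem_iInter] at hq
  obtain ⟨i₀, j₀⟩ : ι × κ := Classical.arbitrary _
  exact ⟨_, smul_mem_smul_set (mem_iInter.2 fun i => (hq (i, j₀)).1.1), _,
    smul_mem_smul_set (mem_iInter.2 fun j => (hq (i₀, j)).1.2), (hq (i₀, j₀)).2⟩

end Compactness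

section Riesz

variable {G : Type*} [AddCommGroup G]

def HasRieszDecomposition (C : Set G) : Prop :=
  ∀ u ∈ C, ∀ v ∈ C, ∀ w ∈ C, u + v - w ∈ C →
    ∃ w₁ ∈ C, ∃ w₂ ∈ C, w = w₁ + w₂ ∧ u - w₁ ∈ C ∧ v - w₂ ∈ C

variable {C : AddSubmonoid G} (hC : ∀ p ∈ C, -p ∈ C → p = 0)
include hC

theorem AddSubmonoid.eq_zero_of_sum_eq_zero {ι : Type*} {s : Finset ι} {v : ι → G}
    (hv : ∀ i ∈ s, v i ∈ C) (hsum : ∑ i ∈ s, v i = 0) {i : ι} (hi : i ∈ s) : v i = 0 := by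
  classical
  refine hC _ (hv i hi) ?_
  rw [← Finset.add_sum_erase s v hi, add_eq_zero_iff_neg_eq] at hsum
  exact hsum ▸ C.sum_mem fun j hj => hv j (Finset.mem_of_mem_erase hj)

variable (hR : HasRieszDecomposition (C : Set G))
include hR

theorem HasRieszDecomposition.exists_sum_eq_of_sub_mem {m : ℕ} {v : Fin m → G}
    (hv : ∀ j, v j ∈ C) {w : G} (hw : w ∈ C) (hle : ∑ j, v j - w ∈ C) :
    ∃ ws : Fin m → G, (∀ j, ws j ∈ C) ∧ (∀ j, v j - ws j ∈ C) ∧ ∑ j, ws j = w := by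
  induction m generalizing w with
  | zero =>
    have hw0 : w = 0 := hC w hw (by simpa using hle)
    exact ⟨Fin.elim0, (·.elim0), (·.elim0), by simp [hw0]⟩
  | succ m ih =>
    rw [Fin.sum_univ_succ] at hle
    obtain ⟨w₁, hw₁, w₂, hw₂, rfl, h₁, h₂⟩ :=
      hR _ (hv 0) _ (C.sum_mem fun j _ => hv j.succ) w hw hle
    obtain ⟨ws, hws, hws', hsum⟩ := ih (fun j => hv j.succ) hw₂ h₂
    refine ⟨Fin.cons w₁ ws, Fin.cases hw₁ hws, Fin.cases h₁ hws', ?_⟩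
    rw [Fin.sum_univ_succ]
    simp [hsum]

theorem HasRieszDecomposition.exists_common_refinement {n m : ℕ} {u : Fin n → G}
    {v : Fin m → G} (hu : ∀ i, u i ∈ C) (hv : ∀ j, v j ∈ C) (huv : ∑ i, u i = ∑ j, v j) :
    ∃ w : Fin n → Fin m → G, (∀ i j, w i j ∈ C) ∧ (∀ i, ∑ j, w i j = u i) ∧
      ∀ j, ∑ i, w i j = v j := by
  induction n generalizing v with
  | zero =>
    refine ⟨Fin.elim0, (·.elim0), (·.elim0), fun j => ?_⟩
    rw [Finset.univ_eq_empty, Finset.sum_empty, eq_comm]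
    exact C.eq_zero_of_sum_eq_zero hC (fun j _ => hv j) (by simpa using huv.symm)
      (Finset.mem_univ j)
  | succ n ih =>
    rw [Fin.sum_univ_succ] at huv
    obtain ⟨ws, hws, hws', hsum⟩ := hR.exists_sum_eq_of_sub_mem hC hv (hu 0)
      (by rw [← huv, add_sub_cancel_left]; exact C.sum_mem fun i _ => hu i.succ)
    obtain ⟨w, hw, hrow, hcol⟩ := ih (fun i => hu i.succ) hws'
      (by rw [Finset.sum_sub_distrib, hsum, ← huv, add_sub_cancel_left])
    refine ⟨Fin.cons ws w, Fin.cases hws hw, Fin.cases hsum hrow, fun j => ?_⟩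
    rw [Fin.sum_univ_succ]
    simp [hcol]

end Riesz

section Suspension

variable {S : Type*} [AddCommGroup S] [Module ℝ S] {K : Set S}

def suspension (K : Set S) : Set (ℝ × S) :=
  {p | ∃ l : ℝ, 0 < l ∧ ∃ x ∈ K, p = (l, l • x)} ∪ {0}

theorem mk_mem_suspension {l : ℝ} (hl : 0 < l) {x : S} (hx : x ∈ K) :
    (l, l • x) ∈ suspension K :=
  Or.inl ⟨l, hl, x, hx, rfl⟩

theorem mk_one_mem_suspension {x : S} (hx : x ∈ K) : ((1 : ℝ), x) ∈ suspension K := by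
  simpa using mk_mem_suspension one_pos hx

theorem smul_mem_suspension {c : ℝ} (hc : 0 < c) {p : ℝ × S} (hp : p ∈ suspension K) :
    c • p ∈ suspension K := by
  rcases hp with ⟨l, hl, x, hx, rfl⟩ | rfl
  · simpa [smul_smul] using mk_mem_suspension (mul_pos hc hl) hx
  · simp [suspension]

theorem eq_zero_of_mem_suspension_of_neg_mem {p : ℝ × S} (hp : p ∈ suspension K)
    (hp' : -p ∈ suspension K) : p = 0 := by
  rcases hp with ⟨l, hl, x, hx, rfl⟩ | rfl
  · rcases hp' with ⟨l', hl', _, _, h⟩ | h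
    · linarith [congrArg Prod.fst h, show (-(l, l • x)).1 = -l from rfl]
    · simp only [mem_singleton_iff, Prod.ext_iff, Prod.fst_neg, Prod.fst_zero] at h
      linarith [h.1]
  · rfl

variable (hK : Convex ℝ K)
include hK

theorem add_mem_suspension {p q : ℝ × S} (hp : p ∈ suspension K) (hq : q ∈ suspension K) :
    p + q ∈ suspension K := by
  rcases hp with ⟨a, ha, x, hx, rfl⟩ | rfl
  · rcases hq with ⟨b, hb, y, hy, rfl⟩ | rfl
    · have hab : 0 < a + b := add_pos ha hb
      convert mk_mem_suspension hab (hK hx hy (div_pos ha hab).le (div_pos hb hab).le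
        (by field_simp)) using 1
      ext <;> simp [smul_add, smul_smul, mul_div_cancel₀ _ hab.ne']
    · simpa using mk_mem_suspension ha hx
  · simpa using hq

def suspensionCone : AddSubmonoid (ℝ × S) where
  carrier := suspension K
  add_mem' := add_mem_suspension hK
  zero_mem' := Or.inr rfl

end Suspension

section Homogenize

variable {S W : Type*} [AddCommGroup S] [Module ℝ S] [AddCommGroup W] [Module ℝ W]
  {K : Set S} {T : S → Set W}

noncomputable def homogenize (T : S → Set W) (p : ℝ × S) : Set W :=
  if 0 < p.1 then p.1 • T (p.1⁻¹ • p.2) else 0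

@[simp] theorem homogenize_zero : homogenize T 0 = 0 := by simp [homogenize]

theorem homogenize_mk {l : ℝ} (hl : 0 < l) (x : S) : homogenize T (l, l • x) = l • T x := by
  simp [homogenize, hl, smul_smul, hl.ne']

theorem homogenize_one (x : S) : homogenize T (1, x) = T x := by
  simpa using homogenize_mk (T := T) one_pos x

theorem homogenize_smul {c : ℝ} (hc : 0 < c) (p : ℝ × S) :
    homogenize T (c • p) = c • homogenize T p := by
  by_cases hp : 0 < p.1
  · have hcp : 0 < (c • p).1 := mul_pos hc hp
    have hpt : (c • p).1⁻¹ • (c • p).2 = p.1⁻¹ • p.2 := by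
      simp [smul_smul, mul_inv_rev, inv_mul_cancel_right₀ hc.ne']
    rw [homogenize, if_pos hcp, hpt, homogenize, if_pos hp, Prod.smul_fst, smul_eq_mul, mul_smul]
  · have hcp : ¬0 < (c • p).1 := by simpa [smul_eq_mul, mul_pos_iff_of_pos_left hc] using hp
    rw [homogenize, if_neg hcp, homogenize, if_neg hp, smul_zero]

theorem isCompact_homogenize [TopologicalSpace W] [ContinuousConstSMul ℝ W]
    (hT : ∀ x ∈ K, IsCompact (T x)) {p : ℝ × S} (hp : p ∈ suspension K) :
    IsCompact (homogenize T p) := by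
  rcases hp with ⟨l, hl, x, hx, rfl⟩ | rfl
  · rw [homogenize_mk hl]
    exact (hT x hx).smul l
  · simp

theorem nonempty_homogenize (hT : ∀ x ∈ K, (T x).Nonempty) {p : ℝ × S}
    (hp : p ∈ suspension K) : (homogenize T p).Nonempty := by
  rcases hp with ⟨l, hl, x, hx, rfl⟩ | rfl
  · rw [homogenize_mk hl]
    exact (hT x hx).smul_set
  · simp

theorem homogenize_add_subset (hT : ConvexSetMapOn K T) {p q : ℝ × S}
    (hp : p ∈ suspension K) (hq : q ∈ suspension K) :
    homogenize T p + homogenize T q ⊆ homogenize T (p + q) := by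
  rcases hp with ⟨a, ha, x, hx, rfl⟩ | rfl
  · rcases hq with ⟨b, hb, y, hy, rfl⟩ | rfl
    · have hab : 0 < a + b := add_pos ha hb
      have hθ : 1 - b / (a + b) = a / (a + b) := by field_simp; ring
      have key := hT x hx y hy (b / (a + b)) (div_pos hb hab)
        ((div_lt_one hab).2 (by linarith))
      rw [hθ] at key
      have hsum : ((a, a • x) + (b, b • y) : ℝ × S) =
          (a + b, (a + b) • ((a / (a + b)) • x + (b / (a + b)) • y)) := by
        ext <;> simp [smul_add, smul_smul, mul_div_cancel₀ _ hab.ne']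
      rw [hsum, homogenize_mk ha, homogenize_mk hb, homogenize_mk hab]
      calc a • T x + b • T y = (a + b) • ((a / (a + b)) • T x + (b / (a + b)) • T y) := by
            simp [smul_add, smul_smul, mul_div_cancel₀ _ hab.ne']
        _ ⊆ _ := smul_set_mono key
    · simp
  · simp

theorem sum_homogenize_subset (hK : Convex ℝ K) (hT : ConvexSetMapOn K T) {ι : Type*}
    {s : Finset ι} {v : ι → ℝ × S} (hv : ∀ i ∈ s, v i ∈ suspension K) :
    ∑ i ∈ s, homogenize T (v i) ⊆ homogenize T (∑ i ∈ s, v i) := by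
  have := Finset.sum_induction (fun i => (v i, homogenize T (v i)))
    (fun r : (ℝ × S) × Set W => r.1 ∈ suspension K ∧ r.2 ⊆ homogenize T r.1)
    (fun r r' hr hr' => ⟨add_mem_suspension hK hr.1 hr'.1,
      (add_subset_add hr.2 hr'.2).trans (homogenize_add_subset hT hr.1 hr'.1)⟩)
    ⟨Or.inr rfl, by simp⟩ (fun i hi => ⟨hv i hi, subset_rfl⟩)
  simpa [Prod.fst_sum, Prod.snd_sum] using this.2

end Homogenize

theorem Finset.sum_equivFin_filter {ι M : Type*} [Fintype ι] [AddCommMonoid M] (P : ι → Prop)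
    [DecidablePred P] {f : ι → M} (hf : ∀ i, ¬P i → f i = 0) :
    ∑ k, f ((univ.filter P).equivFin.symm k) = ∑ i, f i := by
  rw [Equiv.sum_comp _ fun i : univ.filter P => f i, Finset.sum_coe_sort,
    Finset.sum_filter_of_ne fun i _ h => not_not.1 (mt (hf i) h)]

structure Decomposition {S : Type*} [AddCommGroup S] [Module ℝ S] (K : Set S) (p : ℝ × S) where
  n : ℕ
  v : Fin n → ℝ × S
  mem : ∀ j, v j ∈ suspension K
  sum_eq : ∑ j, v j = p

namespace Decomposition

variable {S W : Type*} [AddCommGroup S] [Module ℝ S] [AddCommGroup W] [Module ℝ W]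
  {K : Set S} {T : S → Set W} {p : ℝ × S}

def setSum (T : S → Set W) (d : Decomposition K p) : Set W := ∑ j, homogenize T (d.v j)

noncomputable def ofFintype {ι : Type*} [Fintype ι] (v : ι → ℝ × S)
    (hv : ∀ i, v i ∈ suspension K) (hsum : ∑ i, v i = p) : Decomposition K p where
  n := Fintype.card ι
  v := v ∘ (Fintype.equivFin ι).symm
  mem _ := hv _
  sum_eq := (Equiv.sum_comp _ v).trans hsum

theorem setSum_ofFintype {ι : Type*} [Fintype ι] (v : ι → ℝ × S)
    (hv : ∀ i, v i ∈ suspension K) (hsum : ∑ i, v i = p) :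
    (ofFintype v hv hsum).setSum T = ∑ i, homogenize T (v i) :=
  Equiv.sum_comp _ (fun i => homogenize T (v i))

noncomputable def single (hp : p ∈ suspension K) : Decomposition K p :=
  ofFintype (fun _ : Unit => p) (fun _ => hp) (by simp)

theorem setSum_single (hp : p ∈ suspension K) : (single hp).setSum T = homogenize T p := by
  simp [single, setSum_ofFintype]

def smul {c : ℝ} (hc : 0 < c) (d : Decomposition K p) {q : ℝ × S} (hq : c • p = q) :
    Decomposition K q where
  n := d.n
  v j := c • d.v j
  mem j := smul_mem_suspension hc (d.mem j)
  sum_eq := by rw [← Finset.smul_sum, d.sum_eq, hq]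

theorem setSum_smul {c : ℝ} (hc : 0 < c) (d : Decomposition K p) {q : ℝ × S}
    (hq : c • p = q) : (d.smul hc hq).setSum T = c • d.setSum T := by
  simp only [setSum, smul, homogenize_smul hc, Finset.smul_sum]
  rfl

noncomputable def append {q : ℝ × S} (d : Decomposition K p) (e : Decomposition K q) :
    Decomposition K (p + q) :=
  ofFintype (Sum.elim d.v e.v) (Sum.rec d.mem e.mem)
    (by simp only [Fintype.sum_sum_type, Sum.elim_inl, Sum.elim_inr, d.sum_eq, e.sum_eq])

theorem setSum_append {q : ℝ × S} (d : Decomposition K p) (e : Decomposition K q) :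
    (d.append e).setSum T = d.setSum T + e.setSum T := by
  rw [append, setSum_ofFintype, Fintype.sum_sum_type]
  rfl

theorem exists_pos_weights (T : S → Set W) (d : Decomposition K p) :
    ∃ (N : ℕ) (θ : Fin N → ℝ) (xs : Fin N → S), (∀ j, 0 < θ j) ∧ (∀ j, xs j ∈ K) ∧
      ∑ j, θ j = p.1 ∧ ∑ j, θ j • xs j = p.2 ∧ ∑ j, θ j • T (xs j) = d.setSum T := by
  classical
  set e := (Finset.univ.filter fun j => d.v j ≠ 0).equivFin.symm
  have hpos : ∀ k, ∃ l, 0 < l ∧ ∃ x ∈ K, d.v (e k) = (l, l • x) := fun k =>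
    (d.mem _).resolve_right (Finset.mem_filter.1 (e k).2).2
  choose l hl x hx hv using hpos
  have hsum : ∑ k, d.v (e k) = p :=
    (Finset.sum_equivFin_filter _ fun j h => not_not.1 h).trans d.sum_eq
  refine ⟨_, l, x, hl, hx, ?_, ?_, ?_⟩
  · simpa [hv, Prod.fst_sum] using congrArg Prod.fst hsum
  · simpa [hv, Prod.snd_sum] using congrArg Prod.snd hsum
  · calc ∑ k, l k • T (x k) = ∑ k, homogenize T (d.v (e k)) :=
          Finset.sum_congr rfl fun k _ => by rw [hv k, homogenize_mk (hl k)]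
      _ = d.setSum T :=
          Finset.sum_equivFin_filter (f := fun j => homogenize T (d.v j)) _ fun j h => by
            rw [not_not.1 h, homogenize_zero]

theorem nonempty_setSum (hT : ∀ x ∈ K, (T x).Nonempty) (d : Decomposition K p) :
    (d.setSum T).Nonempty :=
  Finset.sum_induction _ Set.Nonempty (fun _ _ => Set.Nonempty.add) (by simp)
    fun j _ => nonempty_homogenize hT (d.mem j)

theorem isCompact_setSum [TopologicalSpace W] [ContinuousAdd W] [ContinuousConstSMul ℝ W]
    (hT : ∀ x ∈ K, IsCompact (T x)) (d : Decomposition K p) : IsCompact (d.setSum T) :=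
  Finset.sum_induction _ IsCompact (fun _ _ => IsCompact.add) (by simp)
    fun j _ => isCompact_homogenize hT (d.mem j)

variable (hK : Convex ℝ K) (hR : HasRieszDecomposition (suspension K))
  (hT : ConvexSetMapOn K T)
include hK hR hT

theorem exists_setSum_subset_both (d e : Decomposition K p) :
    ∃ f : Decomposition K p, f.setSum T ⊆ d.setSum T ∧ f.setSum T ⊆ e.setSum T := by
  obtain ⟨w, hw, hrow, hcol⟩ := HasRieszDecomposition.exists_common_refinement
    (C := suspensionCone hK) (fun _ => eq_zero_of_mem_suspension_of_neg_mem) hR d.mem e.mem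
    (d.sum_eq.trans e.sum_eq.symm)
  replace hw : ∀ i j, w i j ∈ suspension K := hw
  refine ⟨ofFintype (fun ij : Fin d.n × Fin e.n => w ij.1 ij.2) (fun ij => hw ij.1 ij.2)
    (by rw [Fintype.sum_prod_type]; simp only [hrow]; exact d.sum_eq), ?_, ?_⟩
  · rw [setSum_ofFintype, Fintype.sum_prod_type]
    refine Set.finsetSum_subset_finsetSum _ _ _ fun i _ => ?_
    rw [← hrow i]
    exact sum_homogenize_subset hK hT fun j _ => hw i j
  · rw [setSum_ofFintype, Fintype.sum_prod_type_right]
    refine Set.finsetSum_subset_finsetSum _ _ _ fun j _ => ?_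
    rw [← hcol j]
    exact sum_homogenize_subset hK hT fun i _ => hw i j

theorem exists_add_setSum_subset {q : ℝ × S} (hp : p ∈ suspension K) (hq : q ∈ suspension K)
    (d : Decomposition K (p + q)) : ∃ (dp : Decomposition K p) (dq : Decomposition K q),
      dp.setSum T + dq.setSum T ⊆ d.setSum T := by
  obtain ⟨ws, hws, hws', hsum⟩ := HasRieszDecomposition.exists_sum_eq_of_sub_mem
    (C := suspensionCone hK) (fun _ => eq_zero_of_mem_suspension_of_neg_mem) hR d.mem hp
    (by rw [d.sum_eq, add_sub_cancel_left]; exact hq)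
  refine ⟨⟨d.n, ws, hws, hsum⟩, ⟨d.n, fun j => d.v j - ws j, hws', ?_⟩, ?_⟩
  · rw [Finset.sum_sub_distrib, d.sum_eq, hsum, add_sub_cancel_left]
  · rw [setSum, setSum, ← Finset.sum_add_distrib]
    refine Set.finsetSum_subset_finsetSum _ _ _ fun j _ => ?_
    simpa using homogenize_add_subset hT (hws j) (hws' j)

end Decomposition

section AffineCore

variable {S W : Type*} [AddCommGroup S] [Module ℝ S] [AddCommGroup W] [Module ℝ W]
  {K : Set S} {T : S → Set W}

def affineCore (K : Set S) (T : S → Set W) (p : ℝ × S) : Set W :=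
  ⋂ d : Decomposition K p, d.setSum T

theorem affineCore_subset_homogenize {p : ℝ × S} (hp : p ∈ suspension K) :
    affineCore K T p ⊆ homogenize T p :=
  (iInter_subset _ (Decomposition.single hp)).trans (Decomposition.setSum_single hp).subset

theorem affineCore_smul {c : ℝ} (hc : 0 < c) (p : ℝ × S) :
    affineCore K T (c • p) = c • affineCore K T p := by
  ext w
  rw [mem_smul_set_iff_inv_smul_mem₀ hc.ne']
  simp only [affineCore, mem_iInter]
  constructor
  · intro hw d
    have := hw (d.smul hc rfl)
    rwa [Decomposition.setSum_smul, mem_smul_set_iff_inv_smul_mem₀ hc.ne'] at this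
  · intro hw d
    have := hw (d.smul (inv_pos.2 hc) (by rw [smul_smul, inv_mul_cancel₀ hc.ne', one_smul]))
    rw [Decomposition.setSum_smul] at this
    exact (smul_mem_smul_set_iff₀ (inv_ne_zero hc.ne') _ _).1 this

theorem mem_affineCore_of_forall {x : S} {y : W}
    (hy : ∀ (N : ℕ) (θ : Fin N → ℝ) (xs : Fin N → S), (∀ j, 0 < θ j) → ∑ j, θ j = 1 →
      (∀ j, xs j ∈ K) → x = ∑ j, θ j • xs j → y ∈ ∑ j, θ j • T (xs j)) :
    y ∈ affineCore K T (1, x) := mem_iInter.2 fun d => by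
  obtain ⟨N, θ, xs, hθ, hxs, hsum, hsum', hset⟩ := d.exists_pos_weights T
  exact hset ▸ hy N θ xs hθ hsum hxs hsum'.symm

variable (hK : Convex ℝ K) (hR : HasRieszDecomposition (suspension K)) (hT : ConvexSetMapOn K T)
include hK hR hT

theorem directed_setSum (p : ℝ × S) :
    Directed (· ⊇ ·) fun d : Decomposition K p => d.setSum T := fun d e =>
  (d.exists_setSum_subset_both hK hR hT e).imp fun _ h => h

theorem add_affineCore_subset {p q : ℝ × S} (hp : p ∈ suspension K) (hq : q ∈ suspension K) :
    affineCore K T p + affineCore K T q ⊆ affineCore K T (p + q) := by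
  rintro _ ⟨u, hu, v, hv, rfl⟩
  refine mem_iInter.2 fun d => ?_
  obtain ⟨dp, dq, hsub⟩ := d.exists_add_setSum_subset hK hR hT hp hq
  exact hsub (add_mem_add (mem_iInter.1 hu dp) (mem_iInter.1 hv dq))

variable [TopologicalSpace W] [T2Space W] [ContinuousAdd W] [ContinuousConstSMul ℝ W]
  (hTc : ∀ x ∈ K, (T x).Nonempty ∧ IsCompact (T x))
include hTc

theorem nonempty_isCompact_affineCore {p : ℝ × S} (hp : p ∈ suspension K) :
    (affineCore K T p).Nonempty ∧ IsCompact (affineCore K T p) :=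
  have : Nonempty (Decomposition K p) := ⟨.single hp⟩
  (directed_setSum hK hR hT p).nonempty_isCompact_iInter fun d =>
    ⟨d.nonempty_setSum fun x hx => (hTc x hx).1, d.isCompact_setSum fun x hx => (hTc x hx).2⟩

theorem affineCore_add {p q : ℝ × S} (hp : p ∈ suspension K) (hq : q ∈ suspension K) :
    affineCore K T (p + q) = affineCore K T p + affineCore K T q := by
  refine Subset.antisymm ?_ (add_affineCore_subset hK hR hT hp hq)
  have : Nonempty (Decomposition K p) := ⟨.single hp⟩
  have : Nonempty (Decomposition K q) := ⟨.single hq⟩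
  have hcpt {r : ℝ × S} (d : Decomposition K r) : IsCompact (d.setSum T) :=
    d.isCompact_setSum fun x hx => (hTc x hx).2
  calc affineCore K T (p + q)
      ⊆ ⋂ (dp : Decomposition K p) (dq : Decomposition K q),
          ((1 : ℝ) • dp.setSum T + (1 : ℝ) • dq.setSum T) := by
        refine subset_iInter₂ fun dp dq => ?_
        simp only [one_smul, ← Decomposition.setSum_append]
        exact iInter_subset _ _
    _ ⊆ (1 : ℝ) • affineCore K T p + (1 : ℝ) • affineCore K T q :=
        iInter_smul_add_smul_subset (directed_setSum hK hR hT p) (directed_setSum hK hR hT q)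
          hcpt hcpt 1 1
    _ = affineCore K T p + affineCore K T q := by simp only [one_smul]

theorem affineOn_affineCore : AffineOn K fun x => affineCore K T (1, x) := by
  intro x hx y hy θ h0 h1
  have hcomb : ((1 : ℝ), (1 - θ) • x + θ • y) = (1 - θ) • ((1 : ℝ), x) + θ • ((1 : ℝ), y) := by
    ext <;> simp
  have h1x := smul_mem_suspension (sub_pos.2 h1) (mk_one_mem_suspension hx)
  have h1y := smul_mem_suspension h0 (mk_one_mem_suspension hy)
  simp only [hcomb, affineCore_add hK hR hT hTc h1x h1y, affineCore_smul (sub_pos.2 h1),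
    affineCore_smul h0]

end AffineCore

section AffineSelections

variable {S W : Type*} [AddCommGroup S] [Module ℝ S] [AddCommGroup W] [Module ℝ W] {K : Set S}

open Classical in
/-- Affine selections of `A`, normalised to vanish off `K` so that they form a compact subset of
the product space `S → W`. -/
noncomputable def affineSelections (K : Set S) (A : S → Set W) : Set (S → W) :=
  univ.pi (fun z => if z ∈ K then A z else {0}) ∩ {a | AffineOn K a}

theorem convex_affineSelections {A : S → Set W} (hA : AffineOn K A) :
    Convex ℝ (affineSelections K A) := by
  refine (convex_pi fun z _ => ?_).inter ?_
  · split_ifs with hz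
    exacts [hA.convex hz, convex_singleton 0]
  · intro a ha b hb p q _ _ _ u hu v hv θ h0 h1
    simp only [Pi.add_apply, Pi.smul_apply, ha u hu v hv θ h0 h1, hb u hu v hv θ h0 h1]
    module

theorem indicator_mem_affineSelections (hK : Convex ℝ K) {A : S → Set W} {a : S → W}
    (ha : ∀ z ∈ K, a z ∈ A z) (haff : AffineOn K a) : K.indicator a ∈ affineSelections K A := by
  refine ⟨fun z _ => ?_, fun x hx y hy θ h0 h1 => ?_⟩
  · by_cases hz : z ∈ K
    · simp [hz, ha z hz]
    · simp [hz]
  · have hxy := hK hx hy (sub_nonneg.2 h1.le) h0.le (sub_add_cancel 1 θ)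
    simp only [indicator_of_mem hxy, indicator_of_mem hx, indicator_of_mem hy]
    exact haff x hx y hy θ h0 h1

theorem isCompact_affineSelections [TopologicalSpace W] [T2Space W] [ContinuousAdd W]
    [ContinuousConstSMul ℝ W] {A : S → Set W} (hA : ∀ z ∈ K, IsCompact (A z)) :
    IsCompact (affineSelections K A) := by
  refine (isCompact_univ_pi fun z => ?_).inter_right ?_
  · split_ifs with hz
    exacts [hA z hz, isCompact_singleton]
  · simp only [AffineOn, ofPred_forall]
    repeat refine isClosed_iInter fun _ => ?_
    exact isClosed_eq (continuous_apply _) (by fun_prop)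

end AffineSelections

section Selection

variable {S W : Type*} [AddCommGroup S] [Module ℝ S] [AddCommGroup W] [Module ℝ W]
  [TopologicalSpace W] {K : Set S}

theorem ContinuousLinearMap.toExposed_smul_add_smul (f : StrongDual ℝ W) {a b : ℝ}
    (ha : 0 < a) (hb : 0 < b) (A B : Set W) :
    f.toExposed (a • A + b • B) = a • f.toExposed A + b • f.toExposed B := by
  ext w
  constructor
  · rintro ⟨⟨_, ⟨u, hu, rfl⟩, _, ⟨v, hv, rfl⟩, rfl⟩, hmax⟩
    refine ⟨_, smul_mem_smul_set ⟨hu, fun u' hu' => ?_⟩, _,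
      smul_mem_smul_set ⟨hv, fun v' hv' => ?_⟩, rfl⟩
    · have := hmax _ (add_mem_add (smul_mem_smul_set hu') (smul_mem_smul_set hv))
      simp only [map_add, map_smul, smul_eq_mul, add_le_add_iff_right] at this
      exact le_of_mul_le_mul_left this ha
    · have := hmax _ (add_mem_add (smul_mem_smul_set hu) (smul_mem_smul_set hv'))
      simp only [map_add, map_smul, smul_eq_mul, add_le_add_iff_left] at this
      exact le_of_mul_le_mul_left this hb
  · rintro ⟨_, ⟨u, hu, rfl⟩, _, ⟨v, hv, rfl⟩, rfl⟩
    refine ⟨add_mem_add (smul_mem_smul_set hu.1) (smul_mem_smul_set hv.1), ?_⟩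
    rintro _ ⟨_, ⟨u', hu', rfl⟩, _, ⟨v', hv', rfl⟩, rfl⟩
    simp only [map_add, map_smul, smul_eq_mul]
    gcongr
    exacts [hu.2 u' hu', hv.2 v' hv']

theorem AffineOn.toExposed {B : S → Set W} (hB : AffineOn K B) (f : StrongDual ℝ W) :
    AffineOn K fun z => f.toExposed (B z) := fun x hx y hy θ h0 h1 => by
  simp only [hB x hx y hy θ h0 h1, f.toExposed_smul_add_smul (sub_pos.2 h1) h0]

variable [T2Space W]

theorem ContinuousLinearMap.nonempty_isCompact_toExposed (f : StrongDual ℝ W) {A : Set W}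
    (hA : A.Nonempty ∧ IsCompact A) : (f.toExposed A).Nonempty ∧ IsCompact (f.toExposed A) :=
  ⟨(hA.2.exists_isMaxOn hA.1 f.continuous.continuousOn).imp fun _ h => ⟨h.1, fun _ hw => h.2 hw⟩,
    ContinuousLinearMap.toExposed.isExposed.isCompact hA.2⟩

theorem AffineOn.iInter [ContinuousAdd W] [ContinuousConstSMul ℝ W] {ι : Type*} [Nonempty ι]
    {B : ι → S → Set W} (hB : ∀ i, AffineOn K (B i)) (hdir : Directed (· ≥ ·) B)
    (hc : ∀ i, ∀ z ∈ K, IsCompact (B i z)) : AffineOn K fun z => ⋂ i, B i z := by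
  intro x hx y hy θ h0 h1
  have hdir_at (z : S) : Directed (· ⊇ ·) fun i => B i z := fun i j =>
    (hdir i j).imp fun _ hk => ⟨hk.1 z, hk.2 z⟩
  refine Subset.antisymm ?_ ?_
  · calc ⋂ i, B i ((1 - θ) • x + θ • y) = ⋂ i, ((1 - θ) • B i x + θ • B i y) :=
          iInter_congr fun i => hB i x hx y hy θ h0 h1
      _ ⊆ ⋂ i, ⋂ j, ((1 - θ) • B i x + θ • B j y) := subset_iInter₂ fun i j => by
          obtain ⟨k, hki, hkj⟩ := hdir i j
          exact (iInter_subset _ k).trans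
            (add_subset_add (smul_set_mono (hki x)) (smul_set_mono (hkj y)))
      _ ⊆ _ := iInter_smul_add_smul_subset (hdir_at x) (hdir_at y) (hc · x hx) (hc · y hy) _ _
  · rintro _ ⟨_, ⟨u, hu, rfl⟩, _, ⟨v, hv, rfl⟩, rfl⟩
    refine mem_iInter.2 fun i => ?_
    rw [hB i x hx y hy θ h0 h1]
    exact add_mem_add (smul_mem_smul_set (mem_iInter.1 hu i))
      (smul_mem_smul_set (mem_iInter.1 hv i))

variable [IsTopologicalAddGroup W] [ContinuousSMul ℝ W] [LocallyConvexSpace ℝ W]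
  (hK : Convex ℝ K) {A : S → Set W} (hA : AffineOn K A)
  (hAc : ∀ z ∈ K, (A z).Nonempty ∧ IsCompact (A z))
include hK hA hAc

theorem AffineOn.exists_selection : ∃ a : S → W, (∀ z ∈ K, a z ∈ A z) ∧ AffineOn K a := by
  let s : Set (S → Set W) := {B | AffineOn K B ∧ ∀ z ∈ K, (B z).Nonempty ∧ IsCompact (B z)}
  have hchain (c : Set (S → Set W)) (hcs : c ⊆ s) (hc : IsChain (· ≥ ·) c) (B₀ : S → Set W)
      (hB₀ : B₀ ∈ c) : ∃ lb ∈ s, ∀ B ∈ c, lb ≤ B := by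
    have : Nonempty c := ⟨⟨B₀, hB₀⟩⟩
    have hdir : Directed (· ≥ ·) fun B : c => (B : S → Set W) := fun B B' =>
      (hc.total B.2 B'.2).elim (fun h => ⟨B', h, le_rfl⟩) fun h => ⟨B, le_rfl, h⟩
    refine ⟨fun z => ⋂ B : c, (B : S → Set W) z,
      ⟨AffineOn.iInter (fun B => (hcs B.2).1) hdir fun B z hz => ((hcs B.2).2 z hz).2,
        fun z hz => Directed.nonempty_isCompact_iInter
          (fun B B' => (hdir B B').imp fun _ h => ⟨h.1 z, h.2 z⟩) fun B => (hcs B.2).2 z hz⟩,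
      fun B hB z => iInter_subset (fun B : c => (B : S → Set W) z) ⟨B, hB⟩⟩
  obtain ⟨B, hBA, ⟨hBaff, hBc⟩, hBmin⟩ :=
    @zorn_le_nonempty₀ (S → Set W)ᵒᵈ _ s hchain A ⟨hA, hAc⟩
  have hsing : ∀ z ∈ K, (B z).Subsingleton := by
    intro z hz u hu v hv
    by_contra huv
    obtain ⟨f, hf⟩ := geometric_hahn_banach_point_point huv
    have hBB' : ∀ z, B z ⊆ f.toExposed (B z) :=
      hBmin ⟨hBaff.toExposed f, fun z hz => f.nonempty_isCompact_toExposed (hBc z hz)⟩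
        fun z _ hw => hw.1
    exact hf.not_ge ((hBB' z hu).2 v hv)
  choose! a ha using fun z hz => (hBc z hz).1
  refine ⟨a, fun z hz => hBA z (ha z hz), fun x hx y hy θ h0 h1 => ?_⟩
  have hxy := hK hx hy (sub_nonneg.2 h1.le) h0.le (sub_add_cancel 1 θ)
  refine hsing _ hxy (ha _ hxy) ?_
  rw [hBaff x hx y hy θ h0 h1]
  exact add_mem_add (smul_mem_smul_set (ha x hx)) (smul_mem_smul_set (ha y hy))

theorem AffineOn.exists_selection_through {x : S} (hx : x ∈ K) {y : W} (hy : y ∈ A x) :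
    ∃ a : S → W, (∀ z ∈ K, a z ∈ A z) ∧ AffineOn K a ∧ a x = y := by
  suffices hyE : y ∈ (fun a : S → W => a x) '' affineSelections K A by
    obtain ⟨a, ⟨haA, haff⟩, rfl⟩ := hyE
    exact ⟨a, fun z hz => by simpa [hz] using haA z trivial, haff, rfl⟩
  by_contra hyE
  obtain ⟨f, u, hfE, hfy⟩ := geometric_hahn_banach_closed_point
    ((convex_affineSelections hA).linear_image (LinearMap.proj x))
    ((isCompact_affineSelections fun z hz => (hAc z hz).2).image (continuous_apply x)).isClosed
    hyE
  obtain ⟨a, ha, haff⟩ := (hA.toExposed f).exists_selection hK fun z hz =>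
    f.nonempty_isCompact_toExposed (hAc z hz)
  have hau := hfE _ ⟨_, indicator_mem_affineSelections hK (fun z hz => (ha z hz).1) haff, rfl⟩
  simp only [LinearMap.coe_proj, Function.eval, indicator_of_mem hx] at hau
  linarith [(ha x hx).2 y hy]

end Selection

theorem stmt5_general {S W : Type*} [AddCommGroup S] [Module ℝ S]
    [AddCommGroup W] [Module ℝ W] [TopologicalSpace W] [IsTopologicalAddGroup W]
    [ContinuousSMul ℝ W] [T2Space W] [LocallyConvexSpace ℝ W]
    (K : Set S) (hKconv : Convex ℝ K)
    (C : Set (ℝ × S))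
    (hC : C = {p : ℝ × S | ∃ l : ℝ, 0 < l ∧ ∃ x ∈ K, p = (l, l • x)} ∪ {0})
    (hRiesz : ∀ u ∈ C, ∀ v ∈ C, ∀ w ∈ C, u + v - w ∈ C →
      ∃ w₁ ∈ C, ∃ w₂ ∈ C, w = w₁ + w₂ ∧ u - w₁ ∈ C ∧ v - w₂ ∈ C)
    (T : S → Set W)
    (hT : ∀ x ∈ K, (T x).Nonempty ∧ IsCompact (T x) ∧ Convex ℝ (T x))
    (hTconvmap : ∀ x ∈ K, ∀ y ∈ K, ∀ θ : ℝ, 0 < θ → θ < 1 →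
      (1 - θ) • T x + θ • T y ⊆ T ((1 - θ) • x + θ • y)) :
    (∃ a : S → W, (∀ x ∈ K, a x ∈ T x) ∧
      (∀ x ∈ K, ∀ y ∈ K, ∀ θ : ℝ, 0 < θ → θ < 1 →
        a ((1 - θ) • x + θ • y) = (1 - θ) • a x + θ • a y)) ∧
    (∀ x ∈ K, ∀ y ∈ T x,
      ((∃ a : S → W, (∀ z ∈ K, a z ∈ T z) ∧
          (∀ u ∈ K, ∀ v ∈ K, ∀ θ : ℝ, 0 < θ → θ < 1 →
            a ((1 - θ) • u + θ • v) = (1 - θ) • a u + θ • a v) ∧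
          a x = y) ↔
        (∀ (N : ℕ) (θ : Fin N → ℝ) (xs : Fin N → S),
          (∀ j, 0 < θ j) → ∑ j, θ j = 1 → (∀ j, xs j ∈ K) →
          x = ∑ j, θ j • xs j → y ∈ ∑ j, θ j • T (xs j)))) := by
  subst hC
  have hTc : ∀ z ∈ K, (T z).Nonempty ∧ IsCompact (T z) := fun z hz => ⟨(hT z hz).1, (hT z hz).2.1⟩
  have hcore := affineOn_affineCore hKconv hRiesz hTconvmap hTc
  have hcore_val (z : S) (hz : z ∈ K) :=
    nonempty_isCompact_affineCore hKconv hRiesz hTconvmap hTc (mk_one_mem_suspension hz)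
  have hcore_sub (z : S) (hz : z ∈ K) : affineCore K T (1, z) ⊆ T z :=
    homogenize_one (T := T) z ▸ affineCore_subset_homogenize (mk_one_mem_suspension hz)
  refine ⟨?_, fun x hx y _ => ⟨?_, fun hyp => ?_⟩⟩
  · obtain ⟨a, ha, haff⟩ := hcore.exists_selection hKconv hcore_val
    exact ⟨a, fun z hz => hcore_sub z hz (ha z hz), haff⟩
  · rintro ⟨a, ha, haff, rfl⟩ N θ xs hθ hsum hxs rfl
    rw [AffineOn.map_sum haff hKconv (fun j _ => (hθ j).le) hsum fun j _ => hxs j]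
    exact finsetSum_mem_finsetSum _ _ _ fun j _ => smul_mem_smul_set (ha _ (hxs j))
  · obtain ⟨a, ha, haff, hax⟩ :=
      hcore.exists_selection_through hKconv hcore_val hx (mem_affineCore_of_forall hyp)
    exact ⟨a, fun z hz => hcore_sub z hz (ha z hz), haff, hax⟩

/-- If the suspension cone of a convex set `K` has the Riesz decomposition
property, then every convex set-valued map on `K` with nonempty compact convex
values in a Hausdorff locally convex real TVS admits an affine selection;
and an affine selection through `(x, y)` exists iff `y` belongs to every
Minkowski combination `θ₁ • T x₁ + ⋯ + θ_N • T x_N` over convex decompositions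
`x = θ₁ x₁ + ⋯ + θ_N x_N` of `x` in `K`. -/
theorem stmt5 {S W : Type*} [AddCommGroup S] [Module ℝ S]
    [AddCommGroup W] [Module ℝ W] [TopologicalSpace W] [IsTopologicalAddGroup W]
    [ContinuousSMul ℝ W] [T2Space W] [LocallyConvexSpace ℝ W]
    (K : Set S) (hKne : K.Nonempty) (hKconv : Convex ℝ K)
    (C : Set (ℝ × S))
    (hC : C = {p : ℝ × S | ∃ l : ℝ, 0 < l ∧ ∃ x ∈ K, p = (l, l • x)} ∪ {0})
    (hRiesz : ∀ u ∈ C, ∀ v ∈ C, ∀ w ∈ C, u + v - w ∈ C →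
      ∃ w₁ ∈ C, ∃ w₂ ∈ C, w = w₁ + w₂ ∧ u - w₁ ∈ C ∧ v - w₂ ∈ C)
    (T : S → Set W)
    (hT : ∀ x ∈ K, (T x).Nonempty ∧ IsCompact (T x) ∧ Convex ℝ (T x))
    (hTconvmap : ∀ x ∈ K, ∀ y ∈ K, ∀ θ : ℝ, 0 < θ → θ < 1 →
      (1 - θ) • T x + θ • T y ⊆ T ((1 - θ) • x + θ • y)) :
    (∃ a : S → W, (∀ x ∈ K, a x ∈ T x) ∧
      (∀ x ∈ K, ∀ y ∈ K, ∀ θ : ℝ, 0 < θ → θ < 1 →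
        a ((1 - θ) • x + θ • y) = (1 - θ) • a x + θ • a y)) ∧
    (∀ x ∈ K, ∀ y ∈ T x,
      ((∃ a : S → W, (∀ z ∈ K, a z ∈ T z) ∧
          (∀ u ∈ K, ∀ v ∈ K, ∀ θ : ℝ, 0 < θ → θ < 1 →
            a ((1 - θ) • u + θ • v) = (1 - θ) • a u + θ • a v) ∧
          a x = y) ↔
        (∀ (N : ℕ) (θ : Fin N → ℝ) (xs : Fin N → S),
          (∀ j, 0 < θ j) → ∑ j, θ j = 1 → (∀ j, xs j ∈ K) →
          x = ∑ j, θ j • xs j → y ∈ ∑ j, θ j • T (xs j)))) :=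
  stmt5_general K hKconv C hC hRiesz T hT hTconvmap
end
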